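/- Let r ≥ 2 be an integer. Every clique of the graph G_r (i.e., every finite set of vertices of G_r that are pairwise adjacent) has at most 2·log₂(r) + 17 vertices. In particular, the clique number of G_r is O(log r) = O(log log n), where n ∈ Θ(2^r) is the number of vertices of G_r. -/

import Mathlib

/-- Polar radius of the level-`k` vertices of the construction `G_r`. -/
noncomputable def rho (r k : ℕ) : ℝ :=
  Real.arsinh (Real.sinh (r : ℝ) / Real.sin (Real.pi / 2 ^ k))

/-- Polar angle of the `m`-th vertex of level `k`. -/
noncomputable def theta (k m : ℕ) : ℝ :=
  (2 * (m : ℝ) - 1) * Real.pi / 2 ^ k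

/-- Vertices of `G_r`: the root (`none`) together with pairs `(k, m)`. -/
abbrev Vertex : Type := Option (ℕ × ℕ)

/-- The pairs `(k, m)` with `2 ≤ k ≤ r` and `1 ≤ m ≤ 2^k` (together with the
root) are the actual vertices of `G_r`. -/
def ValidVertex (r : ℕ) : Vertex → Prop
  | none => True
  | some (k, m) => 2 ≤ k ∧ k ≤ r ∧ 1 ≤ m ∧ m ≤ 2 ^ k

/-- Two vertices represent points at hyperbolic distance at most `2r`
(expressed via the hyperbolic law of cosines). -/
def HypClose (r : ℕ) : Vertex → Vertex → Prop
  | none, none => False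
  | none, some (k, _) => rho r k ≤ 2 * (r : ℝ)
  | some (k, _), none => rho r k ≤ 2 * (r : ℝ)
  | some (k, m), some (k', m') =>
      Real.cosh (rho r k) * Real.cosh (rho r k') -
          Real.sinh (rho r k) * Real.sinh (rho r k') *
            Real.cos (theta k m - theta k' m') ≤ Real.cosh (2 * (r : ℝ))

/-- The hyperbolic uniform disk graph `G_r` of the construction: two distinct
vertices are adjacent iff the corresponding points have hyperbolic distance at
most `2r`. -/
def Gr (r : ℕ) : SimpleGraph Vertex where
  Adj u v := u ≠ v ∧ HypClose r u v
  symm := by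
    constructor
    rintro (_ | ⟨k, m⟩) (_ | ⟨k', m'⟩) ⟨hne, h⟩
    · exact ⟨hne.symm, h⟩
    · exact ⟨hne.symm, h⟩
    · exact ⟨hne.symm, h⟩
    · refine ⟨hne.symm, ?_⟩
      simp only [HypClose] at h ⊢
      have hc : Real.cos (theta k' m' - theta k m) = Real.cos (theta k m - theta k' m') := by
        rw [show theta k' m' - theta k m = -(theta k m - theta k' m') by ring, Real.cos_neg]
      have h1 : Real.cosh (rho r k') * Real.cosh (rho r k) =
          Real.cosh (rho r k) * Real.cosh (rho r k') := mul_comm _ _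
      have h2 : Real.sinh (rho r k') * Real.sinh (rho r k) =
          Real.sinh (rho r k) * Real.sinh (rho r k') := mul_comm _ _
      rw [hc, h1, h2]
      exact h
  loopless := by
    constructor
    rintro v ⟨hne, _⟩
    exact hne rfl

/-!
Adjacency of `(k, m)` and `(k', m')` forces `1 - cos (θ - θ') ≤ 2 sin (π / 2^k) sin (π / 2^k')`,
because `sinh ρ_k = sinh r / sin (π / 2^k)` and `cosh (2r) = 1 + 2 sinh² r`. On a single level
this says that a vertex is adjacent only to its two angular neighbours, so a clique meets every
level in at most two vertices. For levels `a < b < c` met by a clique, the angle between the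
`a`- and `b`-vertices is an odd multiple of `π / 2^b`, and `1 - cos (x - y) ≤ 2 (1 - cos x) +
2 (1 - cos y)` turns the two bounds through the `c`-vertex into `a + c ≤ 2b + 5`. Such a set of
levels in `[2, r]` has at most `log₂ r + 7` elements, and the root adds one more vertex.
-/

open Real Finset

namespace Real

theorem cos_le_cos_of_le_of_le_two_pi_sub {α x : ℝ} (hα : 0 ≤ α) (h₁ : α ≤ x)
    (h₂ : x ≤ 2 * π - α) : cos x ≤ cos α := by
  rcases le_total x π with hx | hx
  · exact cos_le_cos_of_nonneg_of_le_pi hα hx h₁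
  · rw [← cos_two_pi_sub]
    exact cos_le_cos_of_nonneg_of_le_pi hα (by linarith) (by linarith)

theorem cos_lt_cos_of_lt_of_lt_two_pi_sub {α x : ℝ} (hα : 0 ≤ α) (h₁ : α < x)
    (h₂ : x < 2 * π - α) : cos x < cos α := by
  rcases le_total x π with hx | hx
  · exact cos_lt_cos_of_nonneg_of_le_pi hα hx h₁
  · rw [← cos_two_pi_sub]
    exact cos_lt_cos_of_nonneg_of_le_pi hα (by linarith) (by linarith)

theorem cos_odd_mul_pi_div_two_pow_le (j : ℕ) {n : ℤ} (hn : Odd n) :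
    cos (n * (π / 2 ^ j)) ≤ cos (π / 2 ^ j) := by
  set N : ℤ := 2 ^ (j + 1)
  have hN : 0 < N := by positivity
  have hNα : (N : ℝ) * (π / 2 ^ j) = 2 * π := by
    simp only [N]; push_cast; rw [pow_succ]; field_simp
  -- reduce `n` modulo `N`; the residue is odd, hence lies in `[1, N - 1]`
  have hodd : Odd (n % N) := by
    rw [Int.odd_iff, Int.emod_emod_of_dvd n (by simp [N, pow_succ] : (2 : ℤ) ∣ N)]
    exact Int.odd_iff.1 hn
  have h₀ : 0 < n % N :=
    lt_of_le_of_ne (Int.emod_nonneg n hN.ne') (by rintro h; simp [← h] at hodd)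
  have h₁ : n % N < N := Int.emod_lt_of_pos n hN
  have hn_eq : (n : ℝ) * (π / 2 ^ j) = (n % N : ℤ) * (π / 2 ^ j) + (n / N : ℤ) * (2 * π) := by
    have h : (n : ℝ) = N * (n / N : ℤ) + (n % N : ℤ) := by
      exact_mod_cast (Int.mul_ediv_add_emod n N).symm
    rw [h, ← hNα]; ring
  rw [hn_eq, cos_add_int_mul_two_pi]
  apply cos_le_cos_of_le_of_le_two_pi_sub (by positivity)
  · have : (1 : ℝ) ≤ (n % N : ℤ) := by exact_mod_cast h₀
    nlinarith [show 0 < π / 2 ^ j by positivity]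
  · have : ((n % N : ℤ) : ℝ) ≤ N - 1 := by exact_mod_cast Int.le_sub_one_of_lt h₁
    nlinarith [show 0 < π / 2 ^ j by positivity]

theorem one_sub_cos_sub_le (x y : ℝ) :
    1 - cos (x - y) ≤ 2 * (1 - cos x) + 2 * (1 - cos y) := by
  have h (z : ℝ) : 1 - cos z = 2 * sin (z / 2) ^ 2 := by rw [sin_sq_eq_half_sub]; ring_nf
  rw [h, h x, h y, sub_div, sin_sub]
  nlinarith [sq_nonneg (sin (x / 2) * cos (y / 2) + cos (x / 2) * sin (y / 2)),
    mul_le_of_le_one_right (sq_nonneg (sin (x / 2))) (cos_sq_le_one (y / 2)),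
    mul_le_of_le_one_left (sq_nonneg (sin (y / 2))) (cos_sq_le_one (x / 2))]

theorem one_add_sinh_mul_sinh_mul_one_sub_cos_le (x y φ : ℝ) :
    1 + sinh x * sinh y * (1 - cos φ) ≤ cosh x * cosh y - sinh x * sinh y * cos φ := by
  linarith [cosh_sub x y, one_le_cosh (x - y)]

theorem sin_pi_div_two_pow_pos {k : ℕ} (hk : 1 ≤ k) : 0 < sin (π / 2 ^ k) := by
  apply sin_pos_of_pos_of_lt_pi (by positivity)
  rw [div_lt_iff₀ (by positivity)]
  nlinarith [pi_pos, (one_lt_pow₀ (by norm_num : (1 : ℝ) < 2) (by omega : k ≠ 0))]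

theorem sin_pi_div_two_pow_le (k : ℕ) : sin (π / 2 ^ k) ≤ π / 2 ^ k :=
  sin_le (by positivity)

theorem two_div_four_pow_le_one_sub_cos (k : ℕ) : 2 / 4 ^ k ≤ 1 - cos (π / 2 ^ k) := by
  have hx : |π / 2 ^ k| ≤ π := by
    rw [abs_of_pos (by positivity)]
    exact div_le_self pi_pos.le (one_le_pow₀ (by norm_num))
  have h := cos_le_one_sub_mul_cos_sq hx
  have h4 : (4 : ℝ) ^ k = (2 ^ k) ^ 2 := by rw [← pow_mul, mul_comm, pow_mul]; norm_num
  rw [h4]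
  field_simp at h ⊢
  linarith

end Real

namespace Finset

theorem two_pow_card_le_of_two_mul_le {T : Finset ℕ} {N : ℕ} (hN : 0 < N)
    (hpos : ∀ u ∈ T, 0 < u) (hle : ∀ u ∈ T, u ≤ N)
    (hlac : ∀ u ∈ T, ∀ v ∈ T, u < v → 2 * u ≤ v) : 2 ^ #T ≤ 2 * N := by
  induction T using Finset.induction_on_max generalizing N with
  | empty => simp; omega
  | insert v T hlt ih =>
    rw [card_insert_of_notMem fun hv => (hlt v hv).false]
    rcases T.eq_empty_or_nonempty with rfl | ⟨u, hu⟩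
    · simp; omega
    have hhalf : ∀ w ∈ T, 2 * w ≤ v := fun w hw =>
      hlac w (mem_insert_of_mem hw) v (mem_insert_self v T) (hlt w hw)
    have hT : 2 ^ #T ≤ 2 * (v / 2) :=
      ih (by have := hhalf u hu; have := hpos u (mem_insert_of_mem hu); omega)
        (fun w hw => hpos w (mem_insert_of_mem hw))
        (fun w hw => by have := hhalf w hw; omega)
        (fun w hw w' hw' => hlac w (mem_insert_of_mem hw) w' (mem_insert_of_mem hw'))
    have := hle v (mem_insert_self v T)
    rw [pow_succ]
    omega

theorem card_le_logb_add_seven {L : Finset ℕ} {r : ℕ} (hr : 0 < r) (hle : ∀ a ∈ L, a ≤ r)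
    (htriple : ∀ a ∈ L, ∀ b ∈ L, ∀ c ∈ L, a < b → b < c → a + c ≤ 2 * b + 5) :
    (#L : ℝ) ≤ logb 2 r + 7 := by
  have hlog : 0 ≤ logb 2 r := logb_nonneg one_lt_two (by exact_mod_cast hr)
  rcases L.eq_empty_or_nonempty with rfl | hne
  · simp; linarith
  set M := L.max' hne
  have hM : ∀ a ∈ L, a ≤ M := fun a ha => le_max' L a ha
  have hMmem : M ∈ L := max'_mem L hne
  have hhigh : #L ≤ #(L.filter (· + 6 ≤ M)) + 6 := by
    rw [← card_filter_add_card_filter_not (· + 6 ≤ M)]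
    have hsub : L.filter (¬ · + 6 ≤ M) ⊆ Icc (M - 5) M := fun a ha => by
      simp only [mem_filter, mem_Icc] at ha ⊢; have := hM a ha.1; omega
    have := card_le_card hsub
    simp only [Nat.card_Icc] at this
    omega
  set low := L.filter (· + 6 ≤ M)
  -- for `a < b` in `low`, the triple `(a, b, M)` gives `2 (M - 5 - b) ≤ M - 5 - a`
  have hlow : 2 ^ #low ≤ 2 * r := by
    have hinj : Set.InjOn (M - 5 - ·) low := fun a ha b hb h => by
      simp only [low, mem_coe, mem_filter] at ha hb; dsimp only at h; omega
    rw [← card_image_of_injOn hinj]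
    refine two_pow_card_le_of_two_mul_le hr ?_ ?_ ?_ <;> simp only [low, mem_image, mem_filter]
    · rintro _ ⟨a, ⟨-, ha⟩, rfl⟩; omega
    · rintro _ ⟨a, -, rfl⟩; have := hle M hMmem; omega
    · rintro _ ⟨a, ⟨ha, ha'⟩, rfl⟩ _ ⟨b, ⟨hb, hb'⟩, rfl⟩ hab
      have := htriple b hb a ha M hMmem (by omega) (by omega)
      omega
  have : (#low : ℝ) ≤ logb 2 (2 * r) := by
    rw [le_logb_iff_rpow_le one_lt_two (by positivity), rpow_natCast]
    exact_mod_cast hlow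
  rw [logb_mul two_ne_zero (by positivity), logb_self_eq_one one_lt_two] at this
  have : (#L : ℝ) ≤ #low + 6 := by exact_mod_cast hhigh
  linarith

end Finset

theorem theta_sub_theta (k m m' : ℕ) :
    theta k m - theta k m' = ((m : ℝ) - m') * (2 * π / 2 ^ k) := by
  unfold theta; ring

theorem theta_sub_theta_of_lt {k k' : ℕ} (m m' : ℕ) (hk : k < k') :
    ∃ n : ℤ, Odd n ∧ theta k m - theta k' m' = n * (π / 2 ^ k') := by
  obtain ⟨j, rfl⟩ := Nat.exists_eq_add_of_lt hk
  refine ⟨(2 * m - 1) * 2 ^ (j + 1) - (2 * m' - 1), ?_, ?_⟩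
  · exact (Even.mul_left (by simp [pow_succ]) _).sub_odd ⟨m' - 1, by ring⟩
  · unfold theta; push_cast; field_simp; ring

theorem one_sub_cos_le_of_hypClose {r k k' m m' : ℕ} (hr : 1 ≤ r) (hk : 1 ≤ k) (hk' : 1 ≤ k')
    (h : HypClose r (some (k, m)) (some (k', m'))) :
    1 - cos (theta k m - theta k' m') ≤ 2 * sin (π / 2 ^ k) * sin (π / 2 ^ k') := by
  have hs := sin_pi_div_two_pow_pos hk
  have hs' := sin_pi_div_two_pow_pos hk'
  have hS : 0 < sinh (r : ℝ) := sinh_pos_iff.2 (by exact_mod_cast hr)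
  have hcosh : cosh (2 * (r : ℝ)) = 1 + 2 * sinh (r : ℝ) ^ 2 := by
    rw [cosh_two_mul, cosh_sq]; ring
  have key := (one_add_sinh_mul_sinh_mul_one_sub_cos_le (rho r k) (rho r k')
    (theta k m - theta k' m')).trans h
  simp only [rho, sinh_arsinh, hcosh] at key
  rw [div_mul_div_comm, div_mul_eq_mul_div, add_le_add_iff_left,
    div_le_iff₀ (by positivity)] at key
  refine le_of_mul_le_mul_left ?_ (pow_pos hS 2)
  linarith

theorem eq_add_one_or_eq_add_two_pow_sub_one_of_hypClose {r k m m' : ℕ} (hr : 1 ≤ r)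
    (hk : 1 ≤ k) (hm' : 1 ≤ m') (hm : m ≤ 2 ^ k) (hlt : m' < m)
    (h : HypClose r (some (k, m)) (some (k, m'))) :
    m = m' + 1 ∨ m = m' + (2 ^ k - 1) := by
  have hclose := one_sub_cos_le_of_hypClose hr hk hk h
  have hsin : 2 * sin (π / 2 ^ k) * sin (π / 2 ^ k) = 1 - cos (2 * π / 2 ^ k) := by
    rw [mul_assoc, ← sq, sin_sq_eq_half_sub]; ring_nf
  rw [theta_sub_theta, hsin] at hclose
  by_contra! hne
  set β := 2 * π / 2 ^ k
  have hβ : 0 < β := by positivity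
  have hNβ : 2 ^ k * β = 2 * π := by simp only [β]; field_simp
  have hd₁ : (2 : ℝ) ≤ m - m' := by
    have : m' + 2 ≤ m := by omega
    rw [le_sub_iff_add_le']; exact_mod_cast this
  have hd₂ : (m : ℝ) - m' + 2 ≤ 2 ^ k := by
    have : m + 2 ≤ m' + 2 ^ k := by omega
    rw [sub_add_eq_add_sub, sub_le_iff_le_add']; exact_mod_cast this
  have : cos ((m - m') * β) < cos β :=
    cos_lt_cos_of_lt_of_lt_two_pi_sub hβ.le (by nlinarith) (by nlinarith)
  linarith

theorem add_le_two_mul_add_five_of_hypClose {r a b c m₁ m₂ m₃ : ℕ} (hr : 1 ≤ r) (ha : 1 ≤ a)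
    (hab : a < b) (hbc : b < c)
    (h₁ : HypClose r (some (a, m₁)) (some (c, m₃)))
    (h₂ : HypClose r (some (b, m₂)) (some (c, m₃))) : a + c ≤ 2 * b + 5 := by
  have hx := one_sub_cos_le_of_hypClose hr ha (by omega) h₁
  have hy := one_sub_cos_le_of_hypClose hr (by omega) (by omega) h₂
  obtain ⟨n, hn, hab_odd⟩ := theta_sub_theta_of_lt m₁ m₂ hab
  have hcross : 1 - cos (π / 2 ^ b) ≤
      1 - cos ((theta a m₁ - theta c m₃) - (theta b m₂ - theta c m₃)) := by
    rw [sub_sub_sub_cancel_right, hab_odd]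
    linarith [cos_odd_mul_pi_div_two_pow_le b hn]
  have hpow : π / 2 ^ b ≤ π / 2 ^ a :=
    div_le_div_of_nonneg_left pi_pos.le (by positivity) (pow_le_pow_right₀ (by norm_num) hab.le)
  have hsa := sin_pi_div_two_pow_le a
  have hsb := sin_pi_div_two_pow_le b
  have hsc := sin_pi_div_two_pow_le c
  have hsc₀ := (sin_pi_div_two_pow_pos (show 1 ≤ c by omega)).le
  have hsa₀ := (sin_pi_div_two_pow_pos ha).le
  have hsb₀ := (sin_pi_div_two_pow_pos (show 1 ≤ b by omega)).le
  have hbound : 2 / 4 ^ b ≤ 8 * (π / 2 ^ a) * (π / 2 ^ c) := by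
    nlinarith [two_div_four_pow_le_one_sub_cos b, one_sub_cos_sub_le (theta a m₁ - theta c m₃)
      (theta b m₂ - theta c m₃)]
  have hπ : π ^ 2 < 16 := by nlinarith [pi_lt_four, pi_pos]
  have hlt : (2 : ℝ) ^ (a + c) < 2 ^ (2 * b + 6) := by
    have h64 : (2 : ℝ) ^ (2 * b + 6) = 64 * 4 ^ b := by rw [pow_add, pow_mul]; norm_num; ring
    rw [pow_add, h64]
    rw [div_le_iff₀ (by positivity)] at hbound
    field_simp at hbound
    nlinarith [pow_pos (by norm_num : (0 : ℝ) < 4) b]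
  have := (pow_lt_pow_iff_right₀ (by norm_num : (1 : ℝ) < 2)).1 hlt
  omega

theorem card_filter_fst_eq_le_two {r : ℕ} (hr : 1 ≤ r) {P : Finset (ℕ × ℕ)}
    (hvalid : ∀ p ∈ P, ValidVertex r (some p))
    (hclose : ∀ p ∈ P, ∀ q ∈ P, p ≠ q → HypClose r (some p) (some q)) (k : ℕ) :
    #{p ∈ P | p.1 = k} ≤ 2 := by
  have neighbour : ∀ m m', (k, m) ∈ P → (k, m') ∈ P → m' < m →
      m = m' + 1 ∨ m = m' + (2 ^ k - 1) := by
    intro m m' hm hm' hlt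
    obtain ⟨hk, -, -, hm_le⟩ := hvalid _ hm
    obtain ⟨-, -, hm'_pos, -⟩ := hvalid _ hm'
    exact eq_add_one_or_eq_add_two_pow_sub_one_of_hypClose hr (by omega) hm'_pos hm_le hlt
      (hclose _ hm _ hm' (by simp [hlt.ne']))
  by_contra! h
  obtain ⟨⟨k₁, x⟩, hx, ⟨k₂, y⟩, hy, ⟨k₃, z⟩, hz, hxy, hxz, hyz⟩ := two_lt_card.1 h
  simp only [mem_filter] at hx hy hz
  obtain ⟨hx, hk₁⟩ := hx
  obtain ⟨hy, hk₂⟩ := hy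
  obtain ⟨hz, hk₃⟩ := hz
  subst k₁ k₂ k₃
  have := neighbour x y hx hy
  have := neighbour y x hy hx
  have := neighbour x z hx hz
  have := neighbour z x hz hx
  have := neighbour y z hy hz
  have := neighbour z y hz hy
  obtain ⟨hk, -, hx₁, hx₂⟩ := hvalid _ hx
  obtain ⟨-, -, hy₁, hy₂⟩ := hvalid _ hy
  obtain ⟨-, -, hz₁, hz₂⟩ := hvalid _ hz
  have : 4 ≤ 2 ^ k := le_trans (by norm_num) (Nat.pow_le_pow_right two_pos hk)
  simp only [ne_eq, Prod.mk.injEq, true_and] at hxy hxz hyz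
  omega

/-- Lemma 18 (Gr_clique_loglogn): every clique of `G_r` has at most
`2·log₂(r) + 17` vertices. -/
theorem Gr_clique_bound (r : ℕ) (hr : 2 ≤ r) (C : Finset Vertex)
    (hvalid : ∀ v ∈ C, ValidVertex r v)
    (hclique : (Gr r).IsClique (↑C : Set Vertex)) :
    (C.card : ℝ) ≤ 2 * Real.logb 2 r + 17 := by
  classical
  set P := C.eraseNone
  have hPvalid : ∀ p ∈ P, ValidVertex r (some p) := fun p hp => hvalid _ (mem_eraseNone.1 hp)
  have hPclose : ∀ p ∈ P, ∀ q ∈ P, p ≠ q → HypClose r (some p) (some q) := fun p hp q hq hpq =>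
    (hclique (mem_eraseNone.1 hp) (mem_eraseNone.1 hq) (Option.some_injective _ |>.ne hpq)).2
  have hC : #C ≤ #P + 1 := by
    rw [← card_insertNone, insertNone_eraseNone]
    exact card_le_card (subset_insert none C)
  have hP : #P ≤ 2 * #(P.image Prod.fst) :=
    card_le_mul_card_image P 2 fun k _ => card_filter_fst_eq_le_two (by omega) hPvalid hPclose k
  have hlevels : (#(P.image Prod.fst) : ℝ) ≤ logb 2 r + 7 := by
    refine card_le_logb_add_seven (by omega) ?_ ?_ <;> simp only [mem_image]
    · rintro _ ⟨p, hp, rfl⟩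
      exact (hPvalid p hp).2.1
    · rintro _ ⟨p, hp, rfl⟩ _ ⟨q, hq, rfl⟩ _ ⟨w, hw, rfl⟩ hpq hqw
      have := (hPvalid p hp).1
      exact add_le_two_mul_add_five_of_hypClose (by omega) (by omega) hpq hqw
        (hPclose p hp w hw (by rintro rfl; omega)) (hPclose q hq w hw (by rintro rfl; omega))
  have : (#C : ℝ) ≤ 2 * #(P.image Prod.fst) + 1 := by exact_mod_cast hC.trans (by omega)
  linarith
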